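/- arXiv:1907.07364 — 6 statements merged into one kernel-verified Lean document; each statement's English description precedes it below -/
import Mathlib

section
/- For a vector of positive multiplicities β of length a with Σ_{i=1}^a i·β_i = k, the sum over all compositions α = (α_1,...,α_l) of k satisfying #{j : α_j = i} = β_i for each i, of 1/(α_1·(α_1+α_2)···(α_1+...+α_l)), equals 1/(∏_{i=1}^a i^{β_i}·β_i!). -/
/-!
Split off the last part of a composition: whatever it is, the last partial sum is the total
`k = ∑ i, i β_i`, so the sum `S(β)` satisfies `S(β) = k⁻¹ ∑_{β_x ≠ 0} S(β - e_x)`.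
With `P(β) = ∏ i, i^{β_i} β_i!` one has `P(β - e_x) = P(β) / (x β_x)`, hence by induction on
the number of parts `S(β) = k⁻¹ ∑_x x β_x / P(β) = 1 / P(β)`.
-/

open Finset Function Nat

section

variable {ι : Type*} {L : ℕ}

def prefixSumProd {R : Type*} [CommSemiring R] (w : ι → R) (α : Fin L → ι) : R :=
  ∏ j, ∑ j' ∈ univ.filter (fun j' => j' ≤ j), w (α j')

theorem prefixSumProd_snoc {R : Type*} [CommSemiring R] (w : ι → R) (α : Fin L → ι)
    (x : ι) :
    prefixSumProd w (Fin.snoc α x : Fin (L + 1) → ι)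
      = prefixSumProd w α * ∑ j, w ((Fin.snoc α x : Fin (L + 1) → ι) j) := by
  simp only [prefixSumProd, Fin.prod_univ_castSucc,
    filter_true_of_mem fun j _ => Fin.le_last j]
  congr 2 with j
  rw [sum_filter, sum_filter, Fin.sum_univ_castSucc]
  simp [(Fin.castSucc_lt_last j).not_ge]

variable [DecidableEq ι]

theorem card_filter_snoc_eq (α : Fin L → ι) (x i : ι) :
    #(univ.filter fun j => (Fin.snoc α x : Fin (L + 1) → ι) j = i)
      = #(univ.filter fun j => α j = i) + if x = i then 1 else 0 := by
  rw [card_filter, card_filter, Fin.sum_univ_castSucc]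
  simp

variable [Fintype ι]

def wordsWithCounts (L : ℕ) (β : ι → ℕ) : Finset (Fin L → ι) :=
  univ.filter fun α => ∀ i, #(univ.filter fun j => α j = i) = β i

theorem sum_comp_eq_sum_smul_of_mem_wordsWithCounts {M : Type*} [AddCommMonoid M]
    {β : ι → ℕ} {α : Fin L → ι} (hα : α ∈ wordsWithCounts L β) (f : ι → M) :
    ∑ j, f (α j) = ∑ i, β i • f i := by
  rw [← sum_fiberwise univ α]
  refine sum_congr rfl fun i _ => ?_
  rw [sum_congr rfl fun j hj => by rw [(mem_filter.1 hj).2], sum_const, (mem_filter.1 hα).2 i]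

theorem snoc_mem_wordsWithCounts_iff {β : ι → ℕ} (α : Fin L → ι) (x : ι) :
    Fin.snoc α x ∈ wordsWithCounts (L + 1) β ↔
      β x ≠ 0 ∧ α ∈ wordsWithCounts L (update β x (β x - 1)) := by
  simp only [wordsWithCounts, mem_filter, mem_univ, true_and, card_filter_snoc_eq]
  constructor
  · intro h
    refine ⟨by simp [← h x], fun i => ?_⟩
    have hi := h i
    rcases eq_or_ne i x with rfl | hix
    · simp only [if_true] at hi; simp; omega
    · simp_all [Ne.symm hix]
  · rintro ⟨hx, h⟩ i
    have hi := h i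
    rcases eq_or_ne i x with rfl | hix
    · simp at hi; simp; omega
    · simp_all [Ne.symm hix]

theorem sum_wordsWithCounts_succ {M : Type*} [AddCommMonoid M] (β : ι → ℕ)
    (f : (Fin (L + 1) → ι) → M) :
    ∑ α ∈ wordsWithCounts (L + 1) β, f α
      = ∑ x ∈ univ.filter (fun x => β x ≠ 0),
          ∑ α ∈ wordsWithCounts L (update β x (β x - 1)), f (Fin.snoc α x) := by
  rw [← univ_inter (wordsWithCounts _ _), ← sum_ite_mem,
    ← Fintype.sum_equiv (Fin.snocEquiv fun _ => ι) (fun p : ι × (Fin L → ι) =>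
      if Fin.snoc p.2 p.1 ∈ wordsWithCounts (L + 1) β then f (Fin.snoc p.2 p.1) else 0) _
      fun _ => rfl, Fintype.sum_prod_type, sum_filter]
  refine sum_congr rfl fun x _ => ?_
  simp only [snoc_mem_wordsWithCounts_iff, ite_and]
  split_ifs <;> simp

theorem prod_pow_mul_factorial_update_mul {R : Type*} [CommSemiring R] (w : ι → R)
    {β : ι → ℕ} {x : ι} (hx : β x ≠ 0) :
    (∏ i, w i ^ update β x (β x - 1) i * (update β x (β x - 1) i)!) * (β x * w x)
      = ∏ i, w i ^ β i * (β i)! := by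
  obtain ⟨n, hn⟩ := Nat.exists_eq_succ_of_ne_zero hx
  rw [Fintype.prod_eq_mul_prod_compl x,
    Fintype.prod_eq_mul_prod_compl x (fun i => w i ^ β i * _),
    prod_congr rfl fun i hi => by rw [update_of_ne (by simpa using hi)]]
  simp only [update_self, hn, Nat.succ_sub_one, factorial_succ, pow_succ]
  push_cast
  ring

theorem sum_update_sub_one {β : ι → ℕ} {x : ι} (hx : β x ≠ 0) :
    ∑ i, update β x (β x - 1) i + 1 = ∑ i, β i := by
  rw [sum_update_of_mem (mem_univ x), Fintype.sum_eq_add_sum_compl x, compl_eq_univ_sdiff]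
  omega

theorem sum_inv_prefixSumProd_wordsWithCounts_succ {K : Type*} [Field K] (w : ι → K)
    (β : ι → ℕ) :
    ∑ α ∈ wordsWithCounts (L + 1) β, (prefixSumProd w α)⁻¹
      = (∑ i, (β i : K) * w i)⁻¹ * ∑ x ∈ univ.filter (fun x => β x ≠ 0),
          ∑ α ∈ wordsWithCounts L (update β x (β x - 1)), (prefixSumProd w α)⁻¹ := by
  rw [sum_wordsWithCounts_succ, mul_sum]
  refine sum_congr rfl fun x hx => ?_
  rw [mul_sum]
  refine sum_congr rfl fun α hα => ?_
  have hsnoc := (snoc_mem_wordsWithCounts_iff α x).2 ⟨(mem_filter.1 hx).2, hα⟩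
  rw [prefixSumProd_snoc, sum_comp_eq_sum_smul_of_mem_wordsWithCounts hsnoc, mul_inv, mul_comm]
  simp only [nsmul_eq_mul]

theorem sum_inv_prefixSumProd_wordsWithCounts {K : Type*} [Field K] [LinearOrder K]
    [IsStrictOrderedRing K] (w : ι → K) (L : ℕ) (β : ι → ℕ)
    (hw : ∀ i, β i ≠ 0 → 0 < w i) (hL : L = ∑ i, β i) :
    ∑ α ∈ wordsWithCounts L β, (prefixSumProd w α)⁻¹
      = (∏ i, w i ^ β i * (β i)!)⁻¹ := by
  induction L generalizing β with
  | zero =>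
    obtain rfl : β = 0 := funext fun i => sum_eq_zero_iff.1 hL.symm i (mem_univ i)
    simp [wordsWithCounts, prefixSumProd]
  | succ L ih =>
    have hterm (i : ι) (hi : β i ≠ 0) : 0 < (β i : K) * w i :=
      mul_pos (by positivity) (hw i hi)
    obtain ⟨y, hy⟩ : ∃ y, β y ≠ 0 := by
      by_contra! h
      simp [h] at hL
    have hk : 0 < ∑ i, (β i : K) * w i := by
      refine sum_pos' (fun i _ => ?_) ⟨y, mem_univ y, hterm y hy⟩
      rcases eq_or_ne (β i) 0 with h | h
      · simp [h]
      · exact (hterm i h).le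
    rw [sum_inv_prefixSumProd_wordsWithCounts_succ, inv_mul_eq_iff_eq_mul₀ hk.ne',
      ← sum_filter_of_ne (f := fun i => (β i : K) * w i) (p := fun i => β i ≠ 0)
        fun i _ h hi => h (by simp [hi]), sum_mul]
    refine sum_congr rfl fun x hx => ?_
    have hx : β x ≠ 0 := (mem_filter.1 hx).2
    rw [ih _ (fun i hi => hw i (by rintro h; simp_all [update_apply]))
        (by have := sum_update_sub_one hx; omega),
      ← prod_pow_mul_factorial_update_mul w hx, mul_inv, mul_comm _⁻¹,
      mul_inv_cancel_left₀ (hterm x hx).ne']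

end

theorem composition_harmonic_sum_general (a : ℕ) (β : ℕ → ℕ)
    (hβ0 : β 0 = 0)
    (L : ℕ) (hL : L = ∑ i ∈ Finset.range (a + 1), β i) :
    ∑ α ∈ (Finset.univ : Finset (Fin L → Fin (a + 1))).filter
        (fun α => ∀ i : Fin (a + 1),
          (Finset.univ.filter (fun j => α j = i)).card = β i),
      (∏ j : Fin L, ∑ j' ∈ Finset.univ.filter (fun j' => j' ≤ j),
          ((α j' : ℕ) : ℚ))⁻¹
      = (∏ i ∈ Finset.range (a + 1), (i : ℚ) ^ (β i) * (Nat.factorial (β i) : ℚ))⁻¹ := by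
  rw [← Fin.prod_univ_eq_prod_range (fun i => (i : ℚ) ^ β i * (β i)!)]
  rw [← Fin.sum_univ_eq_sum_range] at hL
  have hw (i : Fin (a + 1)) (hi : β i ≠ 0) : (0 : ℚ) < (i : ℕ) :=
    Nat.cast_pos.2 (Nat.pos_of_ne_zero fun h => hi (by simp [h, hβ0]))
  have h := sum_inv_prefixSumProd_wordsWithCounts (fun i : Fin (a + 1) => ((i : ℕ) : ℚ)) L
    (fun i => β i) hw hL
  unfold wordsWithCounts prefixSumProd at h
  -- the two filters decide `∀ i : Fin (a + 1), _` through different (but equal) instances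
  convert h using 3

/-- **Lemma (harmonic sum over compositions).**
For a multiplicity vector `β` (with `β 0 = 0`, supported on `1..a`) with
`∑ i * β i = k`, the sum over all compositions `α` of `k` whose part `i`
appears exactly `β i` times of `1/(α₁(α₁+α₂)⋯(α₁+⋯+α_l))` equals
`1/(∏ i, i^(β i) * (Nat.factorial (β i) : ℚ))`.  Compositions of length `L = ∑ β i` are encoded
as functions `Fin L → Fin (a+1)`. -/
theorem composition_harmonic_sum (a k : ℕ) (β : ℕ → ℕ)
    (hβ0 : β 0 = 0) (hsupp : ∀ i, a < i → β i = 0)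
    (hk : ∑ i ∈ Finset.range (a + 1), i * β i = k)
    (L : ℕ) (hL : L = ∑ i ∈ Finset.range (a + 1), β i) :
    ∑ α ∈ (Finset.univ : Finset (Fin L → Fin (a + 1))).filter
        (fun α => ∀ i : Fin (a + 1),
          (Finset.univ.filter (fun j => α j = i)).card = β i),
      (∏ j : Fin L, ∑ j' ∈ Finset.univ.filter (fun j' => j' ≤ j),
          ((α j' : ℕ) : ℚ))⁻¹
      = (∏ i ∈ Finset.range (a + 1), (i : ℚ) ^ (β i) * (Nat.factorial (β i) : ℚ))⁻¹ :=
  composition_harmonic_sum_general a β hβ0 L hL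
end

section
/- Let f_k(n) denote the number of unordered factorizations of n into exactly k parts, each part ≥ 2. Then for n ≥ 2 and k ≥ 1, k·f_k(n) = Σ f_{k-i}(n/d^i), where the sum is over all pairs (d, i) with d ≥ 2, i ≥ 1 and d^i dividing n; with boundary condition f_0(1) = 1 and f_k(1) = 0 for k ≥ 1. -/
open Finset

/-!
Double counting. A factorization `s` of `n` into `k` parts is counted once on the right for every
pair `(d, i)` with `1 ≤ i ≤ count d s`, hence `∑ d, count d s = k` times in all. Conversely, the
factorizations containing at least `i` copies of `d` are, after removing those copies, exactly the
factorizations of `n / d ^ i` into `k - i` parts.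
-/

/-- `numFactorizations k n` is the number of unordered factorizations of `n` into
exactly `k` parts, each part `≥ 2`: multisets of cardinality `k` of integers `≥ 2`
with product `n`.  In particular `numFactorizations 0 1 = 1` and
`numFactorizations k 1 = 0` for `k ≥ 1`. -/
noncomputable def numFactorizations (k n : ℕ) : ℕ :=
  Nat.card {s : Multiset ℕ // Multiset.card s = k ∧ (∀ x ∈ s, 2 ≤ x) ∧ s.prod = n}

lemma mem_Icc_prod_of_two_le {s : Multiset ℕ} (htwo : ∀ x ∈ s, 2 ≤ x) {x : ℕ} (hx : x ∈ s) :
    x ∈ Icc 2 s.prod := by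
  have hpos : 0 < s.prod := Multiset.prod_pos fun y hy => by linarith [htwo y hy]
  exact mem_Icc.mpr ⟨htwo x hx, Nat.le_of_dvd hpos (Multiset.dvd_prod hx)⟩

def factorizations (k n : ℕ) : Finset (Multiset ℕ) :=
  {s ∈ ((Icc 2 n).sym k).image (↑) | s.prod = n}

lemma mem_factorizations {k n : ℕ} {s : Multiset ℕ} :
    s ∈ factorizations k n ↔ Multiset.card s = k ∧ (∀ x ∈ s, 2 ≤ x) ∧ s.prod = n := by
  simp only [factorizations, mem_filter, mem_image, mem_sym_iff]
  constructor
  · rintro ⟨⟨t, ht, rfl⟩, hprod⟩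
    exact ⟨t.2, fun x hx => (mem_Icc.mp (ht x hx)).1, hprod⟩
  · rintro ⟨hcard, htwo, rfl⟩
    exact ⟨⟨⟨s, hcard⟩, fun x => mem_Icc_prod_of_two_le htwo, rfl⟩, rfl⟩

lemma numFactorizations_eq_card (k n : ℕ) :
    numFactorizations k n = #(factorizations k n) := by
  rw [numFactorizations, ← Nat.card_eq_finsetCard]
  exact Nat.card_congr (Equiv.subtypeEquivRight fun _ => mem_factorizations.symm)

lemma sub_replicate_mem_factorizations {k n d i : ℕ} {s : Multiset ℕ}
    (hs : s ∈ factorizations k n) (hle : Multiset.replicate i d ≤ s) :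
    s - Multiset.replicate i d ∈ factorizations (k - i) (n / d ^ i) := by
  obtain ⟨hcard, htwo, hprod⟩ := mem_factorizations.mp hs
  have hd : d ^ i ≠ 0 := by
    rw [← Multiset.prod_replicate]
    exact (Multiset.prod_pos fun x hx => by linarith [htwo x (Multiset.mem_of_le hle hx)]).ne'
  refine mem_factorizations.mpr ⟨?_, fun x hx => htwo x (Multiset.mem_of_le tsub_le_self hx), ?_⟩
  · rw [Multiset.card_sub hle, Multiset.card_replicate, hcard]
  · refine Nat.eq_div_of_mul_eq_left hd ?_
    rw [← Multiset.prod_replicate, ← Multiset.prod_add, tsub_add_cancel_of_le hle, hprod]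

lemma add_replicate_mem_factorizations {k n d i : ℕ} {t : Multiset ℕ} (hd : 2 ≤ d) (hik : i ≤ k)
    (hdvd : d ^ i ∣ n) (ht : t ∈ factorizations (k - i) (n / d ^ i)) :
    t + Multiset.replicate i d ∈ factorizations k n := by
  obtain ⟨hcard, htwo, hprod⟩ := mem_factorizations.mp ht
  refine mem_factorizations.mpr ⟨?_, fun x hx => ?_, ?_⟩
  · rw [Multiset.card_add, Multiset.card_replicate, hcard, Nat.sub_add_cancel hik]
  · rcases Multiset.mem_add.mp hx with hx | hx
    · exact htwo x hx
    · exact Multiset.eq_of_mem_replicate hx ▸ hd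
  · rw [Multiset.prod_add, Multiset.prod_replicate, hprod, Nat.div_mul_cancel hdvd]

lemma card_filter_le_count_of_dvd {k n d i : ℕ} (hd : 2 ≤ d) (hik : i ≤ k) (hdvd : d ^ i ∣ n) :
    #{s ∈ factorizations k n | i ≤ s.count d} = numFactorizations (k - i) (n / d ^ i) := by
  rw [numFactorizations_eq_card]
  refine card_bij' (fun s _ => s - Multiset.replicate i d) (fun t _ => t + Multiset.replicate i d)
    (fun s hs => ?_) (fun t ht => ?_) (fun s hs => ?_) (fun t _ => add_tsub_cancel_right _ _)
  · rw [mem_filter, Multiset.le_count_iff_replicate_le] at hs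
    exact sub_replicate_mem_factorizations hs.1 hs.2
  · rw [mem_filter, Multiset.le_count_iff_replicate_le]
    exact ⟨add_replicate_mem_factorizations hd hik hdvd ht, Multiset.le_add_left _ _⟩
  · rw [mem_filter, Multiset.le_count_iff_replicate_le] at hs
    exact tsub_add_cancel_of_le hs.2

lemma card_filter_le_count {k n d i : ℕ} (hd : 2 ≤ d) (hik : i ≤ k) :
    #{s ∈ factorizations k n | i ≤ s.count d} =
      if d ^ i ∣ n then numFactorizations (k - i) (n / d ^ i) else 0 := by
  split_ifs with hdvd
  · exact card_filter_le_count_of_dvd hd hik hdvd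
  · refine card_eq_zero.mpr (filter_eq_empty_iff.mpr fun s hs hcount => hdvd ?_)
    rw [← (mem_factorizations.mp hs).2.2, ← Multiset.prod_replicate]
    exact Multiset.prod_dvd_prod_of_le (Multiset.le_count_iff_replicate_le.mp hcount)

lemma sum_Icc_indicator_le {m k : ℕ} (h : m ≤ k) :
    ∑ i ∈ Icc 1 k, (if i ≤ m then 1 else 0) = m := by
  rw [sum_boole, Nat.cast_id, show {i ∈ Icc 1 k | i ≤ m} = Icc 1 m by ext; simp; omega,
    Nat.card_Icc, Nat.add_sub_cancel]

lemma sum_sum_indicator_le_count {k : ℕ} {D : Finset ℕ} {s : Multiset ℕ}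
    (hcard : Multiset.card s = k) (hD : ∀ x ∈ s, x ∈ D) :
    ∑ d ∈ D, ∑ i ∈ Icc 1 k, (if i ≤ s.count d then 1 else 0) = k := by
  simp_rw [sum_Icc_indicator_le (hcard ▸ Multiset.count_le_card _ s)]
  rw [Multiset.sum_count_eq_card hD, hcard]

theorem numFactorizations_recursion_general (n k : ℕ) :
    k * numFactorizations k n =
      ∑ d ∈ Finset.Icc 2 n, ∑ i ∈ Finset.Icc 1 k,
        if d ^ i ∣ n then numFactorizations (k - i) (n / d ^ i) else 0 := by
  calc k * numFactorizations k n
      = ∑ s ∈ factorizations k n, k := by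
        rw [numFactorizations_eq_card, sum_const, smul_eq_mul, mul_comm]
    _ = ∑ s ∈ factorizations k n, ∑ d ∈ Icc 2 n, ∑ i ∈ Icc 1 k,
          (if i ≤ s.count d then 1 else 0) := by
        refine sum_congr rfl fun s hs => ?_
        obtain ⟨hcard, htwo, rfl⟩ := mem_factorizations.mp hs
        exact (sum_sum_indicator_le_count hcard fun x => mem_Icc_prod_of_two_le htwo).symm
    _ = ∑ d ∈ Icc 2 n, ∑ i ∈ Icc 1 k, #{s ∈ factorizations k n | i ≤ s.count d} := by
        rw [sum_comm]
        refine sum_congr rfl fun d _ => ?_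
        rw [sum_comm]
        simp_rw [sum_boole, Nat.cast_id]
    _ = _ := sum_congr rfl fun d hd => sum_congr rfl fun i hi =>
        card_filter_le_count (mem_Icc.mp hd).1 (mem_Icc.mp hi).2

/-- **Recursion for `f_k(n)`:** for `n ≥ 2` and `k ≥ 1`,
`k · f_k(n) = ∑ f_{k-i}(n / d^i)`, summed over pairs `(d, i)` with `d ≥ 2`,
`1 ≤ i ≤ k` and `d^i ∣ n` (terms with `i > k` vanish since `f` with negative
index is `0`). -/
theorem numFactorizations_recursion (n k : ℕ) (hn : 2 ≤ n) (hk : 1 ≤ k) :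
    k * numFactorizations k n =
      ∑ d ∈ Finset.Icc 2 n, ∑ i ∈ Finset.Icc 1 k,
        if d ^ i ∣ n then numFactorizations (k - i) (n / d ^ i) else 0 :=
  numFactorizations_recursion_general n k
end

section
/- Let g_k(n) denote the number of factorizations of n into exactly k pairwise distinct parts, each ≥ 2. Then for n ≥ 2 and k ≥ 1, k·g_k(n) = Σ (-1)^{i+1} g_{k-i}(n/d^i), summed over pairs (d, i) with d ≥ 2, i ≥ 1 and d^i | n; with g_0(1) = 1 and g_k(1) = 0 for k ≥ 1. -/
open Finset

/-- `numDistinctFactorizations k n` is the number of factorizations of `n` into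
exactly `k` pairwise distinct parts, each `≥ 2`: finite sets of `k` integers `≥ 2`
with product `n`.  In particular `numDistinctFactorizations 0 1 = 1` and
`numDistinctFactorizations k 1 = 0` for `k ≥ 1`. -/
noncomputable def numDistinctFactorizations (k n : ℕ) : ℕ :=
  Nat.card {s : Finset ℕ // s.card = k ∧ (∀ x ∈ s, 2 ≤ x) ∧ ∏ x ∈ s, x = n}

/-!
Fix `d ≥ 2` and let `a_i(d)` count the factorizations of `n / d ^ i` into `k - i` parts that avoid
`d`. A factorization counted by `g_{k-i}(n / d ^ i)` either avoids `d`, or contains `d` and loses it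
to become one counted by `a_{i+1}(d)`. So `g_{k-i}(n / d ^ i) = a_i(d) + a_{i+1}(d)`, the
alternating sum over `i` telescopes to `a_1(d)`, and `∑_d a_1(d)` counts the pairs
(factorization of `n` into `k` parts, one of its parts), that is `k · g_k(n)`.
-/

lemma Finset.sum_card_eq_sum_card_filter_mem {α : Type*} [DecidableEq α] {s : Finset α}
    {B : Finset (Finset α)} (hB : ∀ t ∈ B, t ⊆ s) :
    ∑ t ∈ B, #t = ∑ a ∈ s, #{t ∈ B | a ∈ t} := by
  calc ∑ t ∈ B, #t = ∑ t ∈ B, #(s ∩ t) :=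
        sum_congr rfl fun t ht => by rw [inter_eq_right.2 (hB t ht)]
    _ = ∑ a ∈ s, #{t ∈ B | a ∈ t} := by
        simp_rw [← filter_mem_eq_inter, card_eq_sum_ones, sum_filter]
        exact sum_comm

lemma Finset.sum_Icc_neg_one_pow_mul_add {R : Type*} [CommRing R] (f : ℕ → R) (k : ℕ) :
    ∑ i ∈ Icc 1 k, (-1) ^ (i + 1) * (f i + f (i + 1)) = f 1 + (-1) ^ (k + 1) * f (k + 1) := by
  induction k with
  | zero => simp
  | succ k ih =>
    rw [sum_Icc_succ_top (by omega), ih]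
    ring

namespace NumDistinctFactorizations

variable (n k : ℕ)

/-- For `d ^ i ∣ n` and `i ≤ k` these are the factorizations counted by `g_{k-i}(n / d ^ i)`;
otherwise there are none, and no truncated subtraction or division occurs. -/
def powMulFactorizations (d i : ℕ) : Finset (Finset ℕ) :=
  (Icc 2 n).powerset.filter fun s => #s + i = k ∧ d ^ i * ∏ x ∈ s, x = n

variable {n k}

lemma mem_powMulFactorizations (hn : n ≠ 0) {d i : ℕ} {s : Finset ℕ} :
    s ∈ powMulFactorizations n k d i ↔
      #s + i = k ∧ (∀ x ∈ s, 2 ≤ x) ∧ d ^ i * ∏ x ∈ s, x = n := by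
  refine mem_filter.trans ⟨fun ⟨hs, hcard, hprod⟩ => ⟨hcard, ?_, hprod⟩,
    fun ⟨hcard, hge, hprod⟩ => ⟨?_, hcard, hprod⟩⟩
  · exact fun x hx => (mem_Icc.1 (mem_powerset.1 hs hx)).1
  · refine mem_powerset.2 fun x hx => mem_Icc.2 ⟨hge x hx, Nat.le_of_dvd (by omega) ?_⟩
    exact hprod ▸ (dvd_prod_of_mem _ hx).mul_left _

lemma card_powMulFactorizations (hn : n ≠ 0) {d i : ℕ} (hd : 0 < d) (hi : i ≤ k) :
    #(powMulFactorizations n k d i) =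
      if d ^ i ∣ n then numDistinctFactorizations (k - i) (n / d ^ i) else 0 := by
  split_ifs with hdvd
  · have hpow : 0 < d ^ i := pow_pos hd i
    rw [numDistinctFactorizations, ← Nat.card_eq_finsetCard]
    refine Nat.card_congr (Equiv.subtypeEquivRight fun s => ?_)
    rw [mem_powMulFactorizations hn, Nat.eq_div_iff_mul_eq_left hpow.ne' hdvd, eq_comm (a := n),
      mul_comm (d ^ i)]
    refine and_congr_left' ?_
    omega
  · refine card_eq_zero.2 (eq_empty_of_forall_notMem fun s hs => hdvd ?_)
    exact ⟨_, ((mem_powMulFactorizations hn).1 hs).2.2.symm⟩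

lemma card_filter_mem_eq_card_filter_notMem_succ (hn : n ≠ 0) {d : ℕ} (hd : 2 ≤ d) (i : ℕ) :
    #{s ∈ powMulFactorizations n k d i | d ∈ s} =
      #{s ∈ powMulFactorizations n k d (i + 1) | d ∉ s} := by
  refine card_nbij' (fun s => s.erase d) (insert d) ?_ ?_ ?_ ?_
  · intro s hs
    simp only [coe_filter, Set.mem_ofPred_eq, mem_powMulFactorizations hn] at hs ⊢
    obtain ⟨⟨hcard, hge, hprod⟩, hds⟩ := hs
    refine ⟨⟨?_, fun x hx => hge x (mem_of_mem_erase hx), ?_⟩, notMem_erase d s⟩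
    · have := card_pos.2 ⟨d, hds⟩
      rw [card_erase_of_mem hds]
      omega
    · rw [← hprod, ← mul_prod_erase s (fun x => x) hds, pow_succ, mul_assoc]
  · intro s hs
    simp only [coe_filter, Set.mem_ofPred_eq, mem_powMulFactorizations hn] at hs ⊢
    obtain ⟨⟨hcard, hge, hprod⟩, hds⟩ := hs
    refine ⟨⟨?_, forall_mem_insert _ _ _ |>.2 ⟨hd, hge⟩, ?_⟩, mem_insert_self d s⟩
    · rw [card_insert_of_notMem hds, ← hcard]; ring
    · rw [← hprod, prod_insert hds, pow_succ]; ring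
  · intro s hs
    exact insert_erase (mem_filter.1 hs).2
  · intro s hs
    exact erase_insert (mem_filter.1 hs).2

lemma ite_dvd_numDistinctFactorizations_eq_add (hn : n ≠ 0) {d i : ℕ} (hd : 2 ≤ d)
    (hi : i ≤ k) :
    (if d ^ i ∣ n then numDistinctFactorizations (k - i) (n / d ^ i) else 0) =
      #{s ∈ powMulFactorizations n k d i | d ∉ s} +
        #{s ∈ powMulFactorizations n k d (i + 1) | d ∉ s} := by
  rw [← card_powMulFactorizations hn (by omega) hi,
    ← card_filter_add_card_filter_not (fun s => d ∈ s),
    card_filter_mem_eq_card_filter_notMem_succ hn hd, add_comm]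

lemma powMulFactorizations_eq_empty_of_lt {d i : ℕ} (h : k < i) :
    powMulFactorizations n k d i = ∅ :=
  filter_false_of_mem fun s _ ⟨hcard, _⟩ => by omega

lemma mul_numDistinctFactorizations_eq_sum (hn : n ≠ 0) :
    k * numDistinctFactorizations k n =
      ∑ d ∈ Icc 2 n, #{s ∈ powMulFactorizations n k d 0 | d ∈ s} := by
  have hpow_zero : ∀ d, powMulFactorizations n k d 0 = powMulFactorizations n k 1 0 := by
    simp [powMulFactorizations]
  simp only [hpow_zero]
  rw [← sum_card_eq_sum_card_filter_mem (B := powMulFactorizations n k 1 0)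
      fun t ht => mem_powerset.1 (mem_filter.1 ht).1,
    sum_congr rfl fun t ht => add_zero #t ▸ ((mem_powMulFactorizations hn).1 ht).1,
    sum_const, smul_eq_mul, card_powMulFactorizations hn one_pos k.zero_le]
  simp [mul_comm]

end NumDistinctFactorizations

open NumDistinctFactorizations

theorem numDistinctFactorizations_recursion_general (n k : ℕ) (hn : 2 ≤ n) :
    (k : ℤ) * numDistinctFactorizations k n =
      ∑ d ∈ Finset.Icc 2 n, ∑ i ∈ Finset.Icc 1 k,
        if d ^ i ∣ n then
          (-1 : ℤ) ^ (i + 1) * numDistinctFactorizations (k - i) (n / d ^ i)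
        else 0 := by
  have hn0 : n ≠ 0 := by omega
  set a : ℕ → ℕ → ℤ := fun d i => #{s ∈ powMulFactorizations n k d i | d ∉ s}
  have hterm : ∀ d ∈ Icc 2 n, ∀ i ∈ Icc 1 k,
      (if d ^ i ∣ n then (-1 : ℤ) ^ (i + 1) * numDistinctFactorizations (k - i) (n / d ^ i)
        else 0) = (-1) ^ (i + 1) * (a d i + a d (i + 1)) := by
    intro d hd i hi
    have := ite_dvd_numDistinctFactorizations_eq_add hn0 (mem_Icc.1 hd).1 (mem_Icc.1 hi).2
    rw [← mul_ite_zero]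
    exact_mod_cast congrArg (fun m : ℕ => (-1 : ℤ) ^ (i + 1) * m) this
  calc (k : ℤ) * numDistinctFactorizations k n = ∑ d ∈ Icc 2 n, a d 1 := by
        rw [← Nat.cast_mul, mul_numDistinctFactorizations_eq_sum hn0, Nat.cast_sum]
        refine sum_congr rfl fun d hd => ?_
        rw [card_filter_mem_eq_card_filter_notMem_succ hn0 (mem_Icc.1 hd).1]
    _ = _ := by
        refine sum_congr rfl fun d hd => ?_
        rw [sum_congr rfl (hterm d hd), sum_Icc_neg_one_pow_mul_add]
        simp [a, powMulFactorizations_eq_empty_of_lt (Nat.lt_succ_self k)]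

/-- **Recursion for `g_k(n)`:** for `n ≥ 2` and `k ≥ 1`,
`k · g_k(n) = ∑ (-1)^{i+1} g_{k-i}(n / d^i)`, summed over pairs `(d, i)` with
`d ≥ 2`, `1 ≤ i ≤ k` and `d^i ∣ n` (terms with `i > k` vanish). -/
theorem numDistinctFactorizations_recursion (n k : ℕ) (hn : 2 ≤ n) (hk : 1 ≤ k) :
    (k : ℤ) * numDistinctFactorizations k n =
      ∑ d ∈ Finset.Icc 2 n, ∑ i ∈ Finset.Icc 1 k,
        if d ^ i ∣ n then
          (-1 : ℤ) ^ (i + 1) * numDistinctFactorizations (k - i) (n / d ^ i)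
        else 0 :=
  numDistinctFactorizations_recursion_general n k hn
end

section
/- For n ≥ 2, g(n) = Σ_{i=0}^{⌊(Ω-1)/2⌋} G_{Ω-2i}(n), where g(n) is the total number of factorizations of n into pairwise distinct parts ≥ 2, G_k(n) is the number of factorizations into exactly k distinct parts ≥ 1, and Ω = Ω(n). -/
open Finset

/-- `g n`: total number of factorizations of `n` into pairwise distinct parts `≥ 2`. -/
noncomputable def numAllDistinctFactorizations (n : ℕ) : ℕ :=
  Nat.card {s : Finset ℕ // (∀ x ∈ s, 2 ≤ x) ∧ ∏ x ∈ s, x = n}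

/-- `G k n`: number of factorizations of `n` into exactly `k` pairwise distinct
parts `≥ 1`. -/
noncomputable def numDistinctFactorizationsOne (k n : ℕ) : ℕ :=
  Nat.card {s : Finset ℕ // s.card = k ∧ (∀ x ∈ s, 1 ≤ x) ∧ ∏ x ∈ s, x = n}

/-!
Write `g_k(n)` for the number of factorizations of `n` into `k` distinct parts `≥ 2`.
Adjoining or removing the part `1` gives `G_k(n) = g_k(n) + g_{k-1}(n)`, so
`G_Ω + G_{Ω-2} + ⋯ = g_Ω + g_{Ω-1} + g_{Ω-2} + ⋯`. Every part `≥ 2` carries a prime factor,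
so `g_k(n) = 0` for `k > Ω`, and `g_0(n) = 0` as `n ≠ 1`; hence the sum is `g(n)`.
-/

open ArithmeticFunction
open scoped ArithmeticFunction.Omega

lemma sum_every_other_eq_sum_of_eq_add_pred {G b : ℕ → ℕ} (hb : b 0 = 0)
    (hG : ∀ k, G k = b k + b (k - 1)) (N : ℕ) :
    ∑ i ∈ range ((N - 1) / 2 + 1), G (N - 2 * i) = ∑ k ∈ range (N + 1), b k := by
  induction N using Nat.strong_induction_on with
  | _ N ih =>
    match N with
    | 0 => simp [hG, hb]
    | 1 => simp [hG, sum_range_succ, add_comm]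
    | 2 => simp [hG, sum_range_succ, hb, add_comm]
    | N + 3 =>
      have hN : (N + 3 - 1) / 2 + 1 = (N + 1 - 1) / 2 + 1 + 1 := by omega
      have hshift : ∀ i, N + 3 - 2 * (i + 1) = N + 1 - 2 * i := by omega
      rw [hN, sum_range_succ']
      simp only [hshift]
      rw [ih (N + 1) (by omega), mul_zero, Nat.sub_zero, hG,
        show N + 3 - 1 = N + 2 from rfl,
        sum_range_succ _ (N + 3), sum_range_succ _ (N + 2)]
      ring

lemma card_le_cardFactors_prod {s : Finset ℕ} (hs : ∀ x ∈ s, 2 ≤ x) :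
    s.card ≤ Ω (∏ x ∈ s, x) := by
  have h0 : ∏ x ∈ s, x ≠ 0 := prod_ne_zero_iff.2 fun x hx => by have := hs x hx; omega
  calc s.card = ∑ x ∈ s, 1 := card_eq_sum_ones s
  _ ≤ ∑ x ∈ s, Ω x := sum_le_sum fun x hx => cardFactors_pos_iff_one_lt.2 (hs x hx)
  _ = Ω (∏ x ∈ s, x) := by
    rw [prod_eq_multiset_prod, Multiset.map_id', cardFactors_multiset_prod (by simpa using h0),
      sum_eq_multiset_sum]

/-- Restricting to divisors makes this finite; for `n = 0` it is empty. -/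
def distinctFactorizationsOne (n : ℕ) : Finset (Finset ℕ) :=
  n.divisors.powerset.filter fun s => ∏ x ∈ s, x = n

def distinctFactorizations (n : ℕ) : Finset (Finset ℕ) :=
  (distinctFactorizationsOne n).filter fun s => 1 ∉ s

variable {n : ℕ} {s : Finset ℕ}

lemma distinctFactorizations_subset : distinctFactorizations n ⊆ distinctFactorizationsOne n :=
  filter_subset _ _

lemma mem_distinctFactorizationsOne (hn : n ≠ 0) :
    s ∈ distinctFactorizationsOne n ↔ ∏ x ∈ s, x = n := by
  refine mem_filter.trans ⟨And.right, fun hs => ⟨mem_powerset.2 fun x hx => ?_, hs⟩⟩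
  exact Nat.mem_divisors.2 ⟨hs ▸ dvd_prod_of_mem _ hx, hn⟩

lemma mem_distinctFactorizations (hn : n ≠ 0) :
    s ∈ distinctFactorizations n ↔ (∀ x ∈ s, 2 ≤ x) ∧ ∏ x ∈ s, x = n := by
  rw [distinctFactorizations, mem_filter, mem_distinctFactorizationsOne hn]
  constructor
  · rintro ⟨hs, h1⟩
    refine ⟨fun x hx => ?_, hs⟩
    have hx0 : x ≠ 0 := fun h => hn (hs ▸ prod_eq_zero (h ▸ hx) rfl)
    have hx1 : x ≠ 1 := fun h => h1 (h ▸ hx)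
    omega
  · rintro ⟨h2, hs⟩
    exact ⟨hs, fun h1 => by simpa using h2 1 h1⟩

lemma numAllDistinctFactorizations_eq_card (hn : n ≠ 0) :
    numAllDistinctFactorizations n = #(distinctFactorizations n) :=
  Nat.subtype_card _ fun _ => mem_distinctFactorizations hn

lemma numDistinctFactorizationsOne_eq_card (k : ℕ) (hn : n ≠ 0) :
    numDistinctFactorizationsOne k n = #{s ∈ distinctFactorizationsOne n | s.card = k} := by
  refine Nat.subtype_card _ fun s => ?_
  rw [mem_filter, mem_distinctFactorizationsOne hn]
  refine ⟨fun ⟨hs, hk⟩ => ⟨hk, fun x hx => ?_, hs⟩, fun ⟨hk, _, hs⟩ => ⟨hs, hk⟩⟩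
  exact Nat.one_le_iff_ne_zero.2 fun h => hn (hs ▸ prod_eq_zero (h ▸ hx) rfl)

lemma card_filter_card_succ_distinctFactorizationsOne (hn : n ≠ 0) (k : ℕ) :
    #{s ∈ distinctFactorizationsOne n | s.card = k + 1} =
      #{s ∈ distinctFactorizations n | s.card = k + 1} +
        #{s ∈ distinctFactorizations n | s.card = k} := by
  rw [← card_filter_add_card_filter_not (p := fun s => 1 ∈ s), add_comm]
  congr 1
  · congr 1
    ext s
    simp only [distinctFactorizations, mem_filter]
    tauto
  · refine card_nbij' (·.erase 1) (insert 1) ?_ ?_ ?_ ?_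
    · intro s
      simp only [coe_filter, Set.mem_ofPred_eq, distinctFactorizations, mem_filter,
        mem_distinctFactorizationsOne hn]
      rintro ⟨⟨hs, hk⟩, h1⟩
      refine ⟨⟨(prod_erase (f := fun x => x) s rfl).trans hs, notMem_erase 1 s⟩, ?_⟩
      rw [card_erase_of_mem h1, hk, Nat.add_sub_cancel]
    · intro s
      simp only [coe_filter, Set.mem_ofPred_eq, distinctFactorizations, mem_filter,
        mem_distinctFactorizationsOne hn]
      rintro ⟨⟨hs, h1⟩, hk⟩
      refine ⟨⟨by rw [prod_insert h1, one_mul, hs], ?_⟩, mem_insert_self 1 s⟩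
      rw [card_insert_of_notMem h1, hk]
    · intro s hs
      exact insert_erase (mem_filter.1 hs).2
    · intro s hs
      exact erase_insert (mem_filter.1 (mem_filter.1 hs).1).2

lemma card_filter_card_eq_zero {𝒜 : Finset (Finset ℕ)} (h𝒜 : 𝒜 ⊆ distinctFactorizationsOne n)
    (hn : n ≠ 1) : #{s ∈ 𝒜 | s.card = 0} = 0 := by
  refine card_eq_zero.2 (filter_eq_empty_iff.2 fun s hs hs0 => hn ?_)
  rw [← (mem_filter.1 (h𝒜 hs)).2, card_eq_zero.1 hs0, prod_empty]

lemma numDistinctFactorizationsOne_eq_add (hn₀ : n ≠ 0) (hn₁ : n ≠ 1) (k : ℕ) :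
    numDistinctFactorizationsOne k n =
      #{s ∈ distinctFactorizations n | s.card = k} +
        #{s ∈ distinctFactorizations n | s.card = k - 1} := by
  rw [numDistinctFactorizationsOne_eq_card k hn₀]
  cases k with
  | zero =>
    rw [Nat.zero_sub, card_filter_card_eq_zero subset_rfl hn₁,
      card_filter_card_eq_zero distinctFactorizations_subset hn₁]
  | succ k => exact card_filter_card_succ_distinctFactorizationsOne hn₀ k

lemma card_distinctFactorizations_eq_sum (hn : n ≠ 0) :
    #(distinctFactorizations n) =
      ∑ k ∈ range (Ω n + 1), #{s ∈ distinctFactorizations n | s.card = k} := by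
  refine card_eq_sum_card_fiberwise fun s hs => mem_range_succ_iff.2 ?_
  obtain ⟨h2, hs⟩ := (mem_distinctFactorizations hn).1 hs
  exact hs ▸ card_le_cardFactors_prod h2

/-- **`g(n) = ∑_{i=0}^{⌊(Ω-1)/2⌋} G_{Ω-2i}(n)`** for `n ≥ 2`, where
`Ω = Ω(n)` is the number of prime factors of `n` counted with multiplicity. -/
theorem numAllDistinctFactorizations_eq (n : ℕ) (hn : 2 ≤ n) :
    numAllDistinctFactorizations n =
      ∑ i ∈ Finset.range ((n.primeFactorsList.length - 1) / 2 + 1),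
        numDistinctFactorizationsOne (n.primeFactorsList.length - 2 * i) n := by
  have hn₀ : n ≠ 0 := by omega
  have hn₁ : n ≠ 1 := by omega
  rw [← cardFactors_apply, numAllDistinctFactorizations_eq_card hn₀,
    card_distinctFactorizations_eq_sum hn₀]
  exact (sum_every_other_eq_sum_of_eq_add_pred
    (card_filter_card_eq_zero distinctFactorizations_subset hn₁)
    (numDistinctFactorizationsOne_eq_add hn₀ hn₁) (Ω n)).symm
end

section
/- For n ≥ 1 and 1 ≤ k ≤ n, Σ_{i=1}^k S(n,i) = Σ_{α ∈ P_k} h(β(α))·β_1(α)^n, where S(n,i) is the Stirling number of the second kind, P_k is the set of partitions of k, β_1(α) is the number of parts of α equal to 1, and h(β) = (∏_i i^{β_i} β_i!)^{-1}. -/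
/-!
Both sides satisfy the same recursion. Let `F(s, k)` count the partitions of a finite set `s`
into at most `k` blocks; for `s ≠ ∅` this is the left-hand side. Removing the block of a fixed
`a ∈ s` gives `F(s, k + 1) = ∑_{T ⊆ s \ {a}} F(T, k)`, so by induction `F(s, k)` depends only on
`n = #s` and is determined by `F(0, k) = 1`, `F(n + 1, 0) = 0` and
`F(n + 1, k + 1) = ∑_j (n choose j) F(j, k)`.

On the right, `R(n, k) = ∑_{α ⊢ k} β₁(α)^n / z_α` with `z_α = ∏ i^{β_i} β_i!`. Removing one part
`1` from `α` turns `β₁^(n+1) / z_α` into `(β₁ + 1)^n / z_{α'}`, and the binomial theorem gives the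
recursion. Removing one part `i` instead, together with `k = ∑ i β_i`, gives
`k R(0, k) = ∑_{i=1}^k R(0, k - i)`, whence `R(0, k) = 1`.
-/

open Finset

/-- The Stirling number of the second kind `S(n,k)`: the number of partitions of
an `n`-element set into exactly `k` blocks. -/
noncomputable def stirlingSnd (n k : ℕ) : ℕ :=
  Nat.card {P : Finpartition (Finset.univ : Finset (Fin n)) // P.parts.card = k}

def zFactor (m : Multiset ℕ) : ℚ :=
  ∏ i ∈ m.toFinset, (i : ℚ) ^ m.count i * (m.count i).factorial

lemma zFactor_eq_prod_of_subset {m : Multiset ℕ} {s : Finset ℕ} (hs : m.toFinset ⊆ s) :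
    zFactor m = ∏ i ∈ s, (i : ℚ) ^ m.count i * (m.count i).factorial :=
  prod_subset hs fun i _ hi => by
    simp [Multiset.count_eq_zero_of_notMem (Multiset.mem_toFinset.not.1 hi)]

lemma zFactor_cons (i : ℕ) (m : Multiset ℕ) :
    zFactor (i ::ₘ m) = i * (m.count i + 1) * zFactor m := by
  have hi : i ∈ insert i m.toFinset := mem_insert_self i _
  rw [zFactor_eq_prod_of_subset (Multiset.toFinset_cons i m).le,
    zFactor_eq_prod_of_subset (subset_insert i _), ← mul_prod_erase _ _ hi,
    ← mul_prod_erase _ _ hi,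
    prod_congr rfl fun j hj => by rw [Multiset.count_cons_of_ne (ne_of_mem_erase hj)]]
  simp only [Multiset.count_cons_self, Nat.factorial_succ]
  push_cast
  ring

lemma zFactor_ne_zero {m : Multiset ℕ} (hm : 0 ∉ m) : zFactor m ≠ 0 :=
  prod_ne_zero_iff.2 fun i hi => by
    have : i ≠ 0 := by rintro rfl; exact hm (Multiset.mem_toFinset.1 hi)
    positivity

lemma Nat.Partition.sum_filter_mem_parts {M : Type*} [AddCommMonoid M] {n a : ℕ} (ha1 : 1 ≤ a)
    (ha : a ≤ n) (f : Multiset ℕ → M) :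
    ∑ p : n.Partition with a ∈ p.parts, f p.parts = ∑ q : (n - a).Partition, f (a ::ₘ q.parts) := by
  rw [sum_subtype (p := fun p : n.Partition => a ∈ p.parts) _ (fun p => by simp),
    ← (Nat.Partition.partitionWithPartEquiv ha1 ha).symm.sum_comp]
  simp

def partitionSum (n k : ℕ) : ℚ :=
  ∑ α : k.Partition, (zFactor α.parts)⁻¹ * (α.parts.count 1 : ℚ) ^ n

lemma partitionSum_succ_zero (n : ℕ) : partitionSum (n + 1) 0 = 0 := by
  simp [partitionSum]

lemma partitionSum_succ_succ (n k : ℕ) :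
    partitionSum (n + 1) (k + 1) = ∑ j ∈ range (n + 1), (n.choose j : ℚ) * partitionSum j k := by
  have hterm : ∀ m : Multiset ℕ, 0 ∉ m →
      (zFactor (1 ::ₘ m))⁻¹ * ((1 ::ₘ m).count 1 : ℚ) ^ (n + 1) =
        ∑ j ∈ range (n + 1), (n.choose j : ℚ) * ((zFactor m)⁻¹ * (m.count 1 : ℚ) ^ j) := by
    intro m hm
    have hz := zFactor_ne_zero hm
    calc (zFactor (1 ::ₘ m))⁻¹ * ((1 ::ₘ m).count 1 : ℚ) ^ (n + 1)
        = (zFactor m)⁻¹ * ((m.count 1 : ℚ) + 1) ^ n := by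
          rw [zFactor_cons, Multiset.count_cons_self]
          push_cast
          field_simp
          ring
      _ = _ := by
          rw [add_pow, mul_sum]
          refine sum_congr rfl fun j _ => ?_
          ring
  have hvanish : ∀ α : (k + 1).Partition,
      (zFactor α.parts)⁻¹ * (α.parts.count 1 : ℚ) ^ (n + 1) ≠ 0 → 1 ∈ α.parts := fun α h => by
    by_contra h1
    simp [Multiset.count_eq_zero_of_notMem h1] at h
  rw [partitionSum, ← sum_filter_of_ne fun α _ => hvanish α,
    Nat.Partition.sum_filter_mem_parts le_rfl (Nat.le_add_left 1 k)
      (fun m => (zFactor m)⁻¹ * (m.count 1 : ℚ) ^ (n + 1))]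
  simp only [partitionSum, mul_sum]
  rw [sum_comm]
  exact sum_congr rfl fun q _ => hterm q.parts fun h => (q.parts_pos h).false

lemma natCast_mul_partitionSum_zero (k : ℕ) :
    (k : ℚ) * partitionSum 0 k = ∑ i ∈ Icc 1 k, partitionSum 0 (k - i) := by
  have hsize : ∀ α : k.Partition,
      (k : ℚ) * (zFactor α.parts)⁻¹ =
        ∑ i ∈ α.parts.toFinset, i * α.parts.count i / zFactor α.parts := by
    intro α
    rw [← sum_div, div_eq_mul_inv]
    congr 1
    conv_lhs => rw [← α.parts_sum, sum_multiset_count]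
    push_cast [smul_eq_mul]
    simp only [mul_comm]
  have hmem : ∀ (α : k.Partition) (i : ℕ), α ∈ univ ∧ i ∈ α.parts.toFinset ↔
      α ∈ ({α : k.Partition | i ∈ α.parts} : Finset _) ∧ i ∈ Icc 1 k := fun α i => by
    simp only [mem_univ, Multiset.mem_toFinset, true_and, mem_filter, mem_Icc]
    exact ⟨fun h => ⟨h, α.parts_pos h, Nat.Partition.le_of_mem_parts h⟩, fun h => h.1⟩
  have hremove : ∀ i ∈ Icc 1 k, ∑ α : k.Partition with i ∈ α.parts,
      (i : ℚ) * α.parts.count i / zFactor α.parts = partitionSum 0 (k - i) := fun i hi => by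
    obtain ⟨hi1, hik⟩ := mem_Icc.1 hi
    rw [Nat.Partition.sum_filter_mem_parts hi1 hik (fun m => (i : ℚ) * m.count i / zFactor m),
      partitionSum]
    refine sum_congr rfl fun q _ => ?_
    have hz := zFactor_ne_zero fun h => (q.parts_pos h).false
    have hi0 : (i : ℚ) ≠ 0 := by exact_mod_cast (Nat.one_le_iff_ne_zero.1 hi1)
    rw [zFactor_cons, Multiset.count_cons_self]
    push_cast
    field_simp
  rw [partitionSum, mul_sum]
  simp only [pow_zero, mul_one, hsize]
  rw [sum_comm' hmem]
  exact sum_congr rfl hremove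

lemma partitionSum_zero_left (k : ℕ) : partitionSum 0 k = 1 := by
  induction k using Nat.strong_induction_on with
  | _ k ih =>
  rcases Nat.eq_zero_or_pos k with rfl | hk
  · simp [partitionSum, zFactor]
  · have hk0 : (k : ℚ) ≠ 0 := by exact_mod_cast hk.ne'
    have h := natCast_mul_partitionSum_zero k
    rw [sum_congr rfl fun i hi => ih (k - i) (by grind), sum_const,
      Nat.card_Icc, nsmul_one, Nat.add_sub_cancel] at h
    exact (mul_eq_left₀ hk0).1 h

section SetPartitions

variable {α : Type*} [DecidableEq α]

def numFinpartitionsLE (s : Finset α) (k : ℕ) : ℕ :=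
  #{P : Finpartition s | #P.parts ≤ k}

lemma numFinpartitionsLE_empty (k : ℕ) : numFinpartitionsLE (∅ : Finset α) k = 1 := by
  have hparts (P : Finpartition (∅ : Finset α)) : P.parts = ∅ :=
    Finpartition.parts_eq_empty_iff.2 rfl
  rw [numFinpartitionsLE, filter_true_of_mem fun P _ => by simp [hparts P], card_univ]
  exact Fintype.card_eq_one_iff.2 ⟨⊥, fun P => Finpartition.ext (by simp [hparts])⟩

lemma numFinpartitionsLE_zero {s : Finset α} (hs : s.Nonempty) : numFinpartitionsLE s 0 = 0 := by
  simp [numFinpartitionsLE, Finpartition.parts_eq_empty_iff, hs.ne_empty]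

lemma Finpartition.sup_erase_eq_sdiff {s B : Finset α} (P : Finpartition s) (hB : B ∈ P.parts) :
    (P.parts.erase B).sup id = s \ B := by
  apply le_antisymm
  · refine Finset.sup_le fun p hp => subset_sdiff.2 ⟨P.le (mem_of_mem_erase hp), ?_⟩
    exact P.disjoint (mem_of_mem_erase hp) hB (ne_of_mem_erase hp)
  · intro x hx
    obtain ⟨p, hp, hxp⟩ := P.exists_mem (mem_sdiff.1 hx).1
    have hne : p ≠ B := fun h => (mem_sdiff.1 hx).2 (h ▸ hxp)
    exact mem_sup.2 ⟨p, mem_erase.2 ⟨hne, hp⟩, hxp⟩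

lemma card_finpartitions_sdiff_part_eq {s T : Finset α} {a : α} (ha : a ∈ s)
    (hT : T ⊆ s.erase a) (k : ℕ) :
    #{P : Finpartition s | #P.parts ≤ k + 1 ∧ s \ P.part a = T} = numFinpartitionsLE T k := by
  have haT : a ∉ T := fun h => (mem_erase.1 (hT h)).1 rfl
  have haB : a ∈ s \ T := mem_sdiff.2 ⟨ha, haT⟩
  have hB : s \ T ≠ ⊥ := nonempty_iff_ne_empty.1 ⟨a, haB⟩
  have hsup : T ⊔ (s \ T) = s := union_sdiff_of_subset (hT.trans (erase_subset a s))
  have hpart (Q : Finpartition T) : (Q.extend hB disjoint_sdiff hsup).part a = s \ T :=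
    Finpartition.part_eq_of_mem _ (mem_insert_self _ _) haB
  refine card_bij' (fun P hP => (P.ofSubset (erase_subset (P.part a) P.parts)
      (P.sup_erase_eq_sdiff (P.part_mem.2 ha))).copy (mem_filter.1 hP).2.2)
    (fun Q _ => Q.extend hB disjoint_sdiff hsup) ?_ ?_ ?_ ?_
  · intro P hP
    have hcard := card_erase_of_mem (P.part_mem.2 ha)
    simp only [mem_filter, mem_univ, true_and] at hP ⊢
    simp only [Finpartition.copy_parts, Finpartition.ofSubset_parts]
    omega
  · intro Q hQ
    simp only [mem_filter, mem_univ, true_and] at hQ ⊢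
    rw [Finpartition.card_extend, hpart, Finset.sdiff_sdiff_eq_self (hT.trans (erase_subset a s))]
    exact ⟨by omega, rfl⟩
  · intro P hP
    have hfib : s \ T = P.part a := by
      rw [← (mem_filter.1 hP).2.2, Finset.sdiff_sdiff_eq_self (P.part_subset a)]
    apply Finpartition.ext
    rw [Finpartition.extend_parts, Finpartition.copy_parts, Finpartition.ofSubset_parts, hfib,
      insert_erase (P.part_mem.2 ha)]
  · intro Q _
    apply Finpartition.ext
    rw [Finpartition.copy_parts, Finpartition.ofSubset_parts, hpart, Finpartition.extend_parts,
      erase_insert fun h => haT (Q.le h haB)]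

lemma numFinpartitionsLE_succ {s : Finset α} {a : α} (ha : a ∈ s) (k : ℕ) :
    numFinpartitionsLE s (k + 1) = ∑ T ∈ (s.erase a).powerset, numFinpartitionsLE T k := by
  have hmaps : Set.MapsTo (fun P : Finpartition s => s \ P.part a)
      ({P : Finpartition s | #P.parts ≤ k + 1} : Finset _) ((s.erase a).powerset : Set _) :=
    fun P _ => mem_powerset.2 fun x hx => by
      obtain ⟨hxs, hxa⟩ := mem_sdiff.1 hx
      exact mem_erase.2 ⟨by rintro rfl; exact hxa (P.mem_part ha), hxs⟩
  rw [numFinpartitionsLE, card_eq_sum_card_fiberwise hmaps]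
  refine sum_congr rfl fun T hT => ?_
  rw [filter_filter, card_finpartitions_sdiff_part_eq ha (mem_powerset.1 hT)]

theorem numFinpartitionsLE_eq_partitionSum (s : Finset α) (k : ℕ) :
    (numFinpartitionsLE s k : ℚ) = partitionSum #s k := by
  induction s using strongInduction generalizing k with
  | H s ih =>
  obtain rfl | ⟨a, ha⟩ := s.eq_empty_or_nonempty
  · rw [numFinpartitionsLE_empty, card_empty, partitionSum_zero_left, Nat.cast_one]
  have hcard : #s = #(s.erase a) + 1 := (card_erase_add_one ha).symm
  cases k with
  | zero => rw [numFinpartitionsLE_zero ⟨a, ha⟩, hcard, partitionSum_succ_zero, Nat.cast_zero]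
  | succ k =>
    rw [numFinpartitionsLE_succ ha, Nat.cast_sum, hcard, partitionSum_succ_succ,
      sum_congr rfl fun T hT => ih T ((mem_powerset.1 hT).trans_ssubset (erase_ssubset ha)) k,
      sum_powerset_apply_card (fun j => partitionSum j k)]
    simp only [nsmul_eq_mul]

lemma sum_card_finpartitions_eq_numFinpartitionsLE {s : Finset α} (hs : s.Nonempty) (k : ℕ) :
    ∑ i ∈ Icc 1 k, #{P : Finpartition s | #P.parts = i} = numFinpartitionsLE s k := by
  have hmaps : Set.MapsTo (fun P : Finpartition s => #P.parts)
      ({P : Finpartition s | #P.parts ≤ k} : Finset _) (Icc 1 k : Set ℕ) := fun P hP => by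
    simp only [coe_filter, mem_univ, true_and, Set.mem_ofPred_eq] at hP
    simp [hP, Nat.one_le_iff_ne_zero, Finpartition.parts_eq_empty_iff, hs.ne_empty]
  rw [numFinpartitionsLE, card_eq_sum_card_fiberwise hmaps]
  refine sum_congr rfl fun i hi => ?_
  rw [filter_filter]
  congr 1
  exact filter_congr fun P _ => by grind

end SetPartitions

theorem sum_stirling_eq_partition_sum_general (n k : ℕ) (hn : 1 ≤ n) :
    ((∑ i ∈ Finset.Icc 1 k, stirlingSnd n i : ℕ) : ℚ) =
      ∑ α ∈ (Finset.univ : Finset (Nat.Partition k)),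
        (∏ i ∈ α.parts.toFinset,
            (i : ℚ) ^ (α.parts.count i) * (Nat.factorial (α.parts.count i) : ℚ))⁻¹ *
          (α.parts.count 1 : ℚ) ^ n := by
  have hne : (univ : Finset (Fin n)).Nonempty := univ_nonempty_iff.2 ⟨⟨0, hn⟩⟩
  simp only [stirlingSnd, Nat.card_eq_fintype_card, Fintype.card_subtype]
  rw [sum_card_finpartitions_eq_numFinpartitionsLE hne, numFinpartitionsLE_eq_partitionSum,
    card_univ, Fintype.card_fin]
  rfl

/-- **Partition-sum identity for partial sums of Stirling numbers:** for `n ≥ 1`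
and `1 ≤ k ≤ n`, `∑_{i=1}^k S(n,i) = ∑_{α ∈ P_k} h(β(α)) · β₁(α)^n`, where
`β₁(α)` is the number of parts of `α` equal to `1` and
`h(β) = (∏ i, i^{β_i} β_i!)⁻¹`. -/
theorem sum_stirling_eq_partition_sum (n k : ℕ) (hn : 1 ≤ n) (hk : 1 ≤ k) (hkn : k ≤ n) :
    ((∑ i ∈ Finset.Icc 1 k, stirlingSnd n i : ℕ) : ℚ) =
      ∑ α ∈ (Finset.univ : Finset (Nat.Partition k)),
        (∏ i ∈ α.parts.toFinset,
            (i : ℚ) ^ (α.parts.count i) * (Nat.factorial (α.parts.count i) : ℚ))⁻¹ *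
          (α.parts.count 1 : ℚ) ^ n :=
  sum_stirling_eq_partition_sum_general n k hn
end

section
/- For n ≥ 1, the n-th Bell number satisfies B_n = Σ_{α ∈ P_n} h(β(α))·β_1(α)^n, where P_n is the set of partitions of n, β_1(α) is the number of parts equal to 1, and h(β) = (∏_i i^{β_i} β_i!)^{-1}. -/
open Finset

/-- The `n`-th Bell number: the number of partitions of an `n`-element set. -/
noncomputable def bell (n : ℕ) : ℕ :=
  Nat.card (Finpartition (Finset.univ : Finset (Fin n)))

/-!
The symmetric group `S_n` acts on the maps `[n] → [n]` by postcomposition, and two maps lie in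
the same orbit exactly when they have the same fibres, so the orbits are the set partitions of
`[n]`. Burnside's lemma therefore gives `n! B_n = ∑_σ fix(σ)^n`, where `fix(σ)` is the number of
fixed points of `σ`. Grouping the permutations by cycle type `α`, of which there are `n! / z_α`
with `z_α = ∏ i^{β_i} β_i!`, and noting that `fix(σ) = β₁(α)`, gives the formula.
-/

open Nat MulAction Equiv

namespace Multiset

def zFactor (s : Multiset ℕ) : ℕ := ∏ i ∈ s.toFinset, i ^ s.count i * (s.count i)!

theorem zFactor_eq_prod_mul (s : Multiset ℕ) :
    s.zFactor = s.prod * ∏ i ∈ s.toFinset, (s.count i)! := by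
  rw [zFactor, prod_mul_distrib, prod_multiset_count]

theorem zFactor_add_of_disjoint {s t : Multiset ℕ} (h : Disjoint s.toFinset t.toFinset) :
    (s + t).zFactor = s.zFactor * t.zFactor := by
  have hprod (u : Multiset ℕ) : u.zFactor = u.toFinsupp.prod fun i k => i ^ k * k ! := rfl
  rw [hprod, hprod, hprod, toFinsupp_add, Finsupp.prod_add_index_of_disjoint h]

theorem zFactor_replicate_one (k : ℕ) : (replicate k 1).zFactor = k ! := by
  rcases k.eq_zero_or_pos with rfl | hk
  · rfl
  · simp [zFactor, toFinset_replicate, hk.ne']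

end Multiset

namespace Nat.Partition

theorem parts_eq_filter_add_replicate {n : ℕ} (α : n.Partition) :
    α.parts = α.parts.filter (2 ≤ ·) + .replicate (n - (α.parts.filter (2 ≤ ·)).sum) 1 := by
  have hones : α.parts.filter (¬ 2 ≤ ·) = .replicate (α.parts.filter (¬ 2 ≤ ·)).card 1 :=
    Multiset.eq_replicate_card.2 fun i hi => by
      have := α.parts_pos (Multiset.mem_of_mem_filter hi)
      have := (Multiset.mem_filter.1 hi).2
      omega
  have hsplit := Multiset.filter_add_not (2 ≤ ·) α.parts
  have hcard : n - (α.parts.filter (2 ≤ ·)).sum = (α.parts.filter (¬ 2 ≤ ·)).card := by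
    have hsum := α.parts_sum
    rw [← hsplit, Multiset.sum_add, hones, Multiset.sum_replicate, smul_eq_mul, mul_one] at hsum
    omega
  rw [hcard, ← hones, hsplit]

end Nat.Partition

namespace Finpartition

variable {α : Type*} [DecidableEq α] {s : Finset α}

theorem ext_part {P Q : Finpartition s} (h : ∀ a ∈ s, P.part a = Q.part a) : P = Q := by
  have hparts (R : Finpartition s) : R.parts = s.image R.part := by
    ext t
    refine ⟨fun ht => ?_, fun ht => ?_⟩
    · obtain ⟨a, ha, rfl⟩ := R.part_surjOn ht
      exact mem_image_of_mem _ ha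
    · obtain ⟨a, ha, rfl⟩ := mem_image.1 ht
      exact R.part_mem.2 ha
  ext1
  rw [hparts, hparts, image_congr h]

end Finpartition

section Kernel

variable {α β : Type*} [Fintype α] [DecidableEq α]

open Classical in
noncomputable def kerPartition (f : α → β) : Finpartition (univ : Finset α) :=
  .ofSetoid (Setoid.ker f)

theorem mem_part_kerPartition {f : α → β} {a b : α} :
    b ∈ (kerPartition f).part a ↔ f a = f b := by
  classical
  rw [kerPartition]
  convert Finpartition.mem_part_ofSetoid_iff_rel
  exact Iff.rfl

theorem kerPartition_eq_iff {f g : α → β} :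
    kerPartition f = kerPartition g ↔ ∀ a b, f a = f b ↔ g a = g b := by
  refine ⟨fun h a b => ?_, fun h => Finpartition.ext_part fun a _ => ?_⟩
  · rw [← mem_part_kerPartition, h, mem_part_kerPartition]
  · ext b
    rw [mem_part_kerPartition, mem_part_kerPartition, h]

theorem exists_kerPartition_eq (P : Finpartition (univ : Finset α)) :
    ∃ f : α → α, kerPartition f = P := by
  have hne (a : α) : (P.part a).Nonempty := P.part_nonempty.2 (mem_univ a)
  have hpart (a : α) : P.part (hne a).choose = P.part a :=
    P.part_eq_of_mem (P.part_mem.2 (mem_univ a)) (hne a).choose_spec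
  refine ⟨fun a => (hne a).choose, Finpartition.ext_part fun a _ => ?_⟩
  ext b
  rw [mem_part_kerPartition, P.mem_part_iff_part_eq_part (mem_univ b) (mem_univ a)]
  refine ⟨fun h => ?_, fun h => by simp only [h]⟩
  rw [← hpart a, h, hpart]

end Kernel

theorem exists_perm_comp_eq_of_ker_eq {α β : Type*} [Finite β] {f g : α → β}
    (h : ∀ a b, f a = f b ↔ g a = g b) : ∃ σ : Equiv.Perm β, σ ∘ f = g := by
  classical
  let e : Set.range f ≃ Set.range g := (Setoid.quotientKerEquivRange f).symm.trans
    ((Quotient.congrRight h).trans (Setoid.quotientKerEquivRange g))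
  refine ⟨e.extendSubtype, funext fun a => ?_⟩
  have hf : (Setoid.quotientKerEquivRange f).symm ⟨f a, a, rfl⟩ = Quotient.mk _ a :=
    Equiv.symm_apply_eq _ |>.2 rfl
  rw [Function.comp_apply, Equiv.extendSubtype_apply_of_mem e _ ⟨a, rfl⟩]
  simp only [e, Equiv.trans_apply, hf]
  rfl

section Burnside

theorem orbitRel_comp_iff {α X : Type*} [Fintype α] [DecidableEq α] [Finite X] {f g : α → X} :
    orbitRel (Perm X) (α → X) f g ↔ kerPartition f = kerPartition g := by
  rw [orbitRel_apply, mem_orbit_iff, kerPartition_eq_iff]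
  refine ⟨?_, fun h => ?_⟩
  · rintro ⟨σ, rfl⟩ a b
    exact σ.injective.eq_iff
  · obtain ⟨σ, hσ⟩ := exists_perm_comp_eq_of_ker_eq fun a b => (h a b).symm
    exact ⟨σ, hσ⟩

variable {X : Type*} [Fintype X] [DecidableEq X]

noncomputable def orbitsEquivFinpartition :
    orbitRel.Quotient (Perm X) (X → X) ≃ Finpartition (univ : Finset X) :=
  .ofBijective (Quotient.lift kerPartition fun _ _ => orbitRel_comp_iff.1)
    ⟨fun p q => Quotient.inductionOn₂ p q fun _ _ h => Quotient.sound (orbitRel_comp_iff.2 h),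
      fun P => (exists_kerPartition_eq P).imp' (Quotient.mk _) fun _ => id⟩

theorem card_fixedBy_comp (σ : Perm X) :
    Nat.card (fixedBy (X → X) σ) = (Fintype.card X - σ.cycleType.sum) ^ Fintype.card X := by
  have e : fixedBy (X → X) σ ≃ (X → Function.fixedPoints σ) :=
    (Equiv.subtypeEquivRight fun f => by rw [mem_fixedBy, funext_iff]; rfl).trans
      (Equiv.subtypePiEquivPi)
  rw [Nat.card_congr e, Nat.card_fun, Nat.card_eq_fintype_card, Nat.card_eq_fintype_card,
    Perm.card_fixedPoints]

theorem factorial_mul_card_finpartition :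
    (Fintype.card X)! * Nat.card (Finpartition (univ : Finset X)) =
      ∑ σ : Perm X, (Fintype.card X - σ.cycleType.sum) ^ Fintype.card X := by
  classical
  have := sum_card_fixedBy_eq_card_orbits_mul_card_group (Perm X) (X → X)
  simp_rw [← Nat.card_eq_fintype_card, card_fixedBy_comp, Nat.card_congr orbitsEquivFinpartition,
    Nat.card_perm, Nat.card_eq_fintype_card] at this
  rw [Nat.card_eq_fintype_card, this, mul_comm]

end Burnside

namespace Equiv.Perm

variable {X : Type*} [Fintype X] [DecidableEq X]

theorem partition_eq_iff_cycleType_eq (σ : Perm X) (α : (Fintype.card X).Partition) :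
    σ.partition = α ↔ σ.cycleType = α.parts.filter (2 ≤ ·) := by
  refine ⟨fun h => h ▸ filter_parts_partition_eq_cycleType.symm, fun h => ?_⟩
  rw [Nat.Partition.ext_iff, parts_partition, α.parts_eq_filter_add_replicate, ← h,
    sum_cycleType]

theorem count_one_parts_partition (σ : Perm X) :
    σ.partition.parts.count 1 = Fintype.card X - σ.cycleType.sum := by
  rw [parts_partition, Multiset.count_add, Multiset.count_replicate_self, sum_cycleType,
    Multiset.count_eq_zero.2 fun h => by simpa using two_le_of_mem_cycleType h, zero_add]

theorem card_partition_eq_mul_zFactor (α : (Fintype.card X).Partition) :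
    #{σ : Perm X | σ.partition = α} * α.parts.zFactor = (Fintype.card X)! := by
  have hle : (α.parts.filter (2 ≤ ·)).sum ≤ Fintype.card X := by
    have := congrArg Multiset.sum (Multiset.filter_add_not (2 ≤ ·) α.parts)
    rw [Multiset.sum_add, α.parts_sum] at this
    omega
  have hparts := α.parts_eq_filter_add_replicate
  simp_rw [partition_eq_iff_cycleType_eq]
  set m := α.parts.filter (2 ≤ ·)
  have hm : ∀ i ∈ m, 2 ≤ i := fun i hi => (Multiset.mem_filter.1 hi).2
  have hdisj : _root_.Disjoint m.toFinset
      (.replicate (Fintype.card X - m.sum) 1 : Multiset ℕ).toFinset :=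
    Finset.disjoint_left.2 fun i him hi => by
      have := hm i (Multiset.mem_toFinset.1 him)
      have := Multiset.eq_of_mem_replicate (Multiset.mem_toFinset.1 hi)
      omega
  rw [hparts, Multiset.zFactor_add_of_disjoint hdisj, Multiset.zFactor_replicate_one,
    Multiset.zFactor_eq_prod_mul]
  convert card_of_cycleType_mul_eq X m using 1
  · ring
  · exact (if_pos ⟨hle, hm⟩).symm

end Equiv.Perm

theorem card_finpartition_eq_sum (X : Type*) [Fintype X] [DecidableEq X] :
    (Nat.card (Finpartition (univ : Finset X)) : ℚ) =
      ∑ α : (Fintype.card X).Partition,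
        (α.parts.zFactor : ℚ)⁻¹ * (α.parts.count 1 : ℚ) ^ Fintype.card X := by
  have hfib (α : (Fintype.card X).Partition) :
      (#{σ : Perm X | σ.partition = α} : ℚ) = (Fintype.card X)! / α.parts.zFactor := by
    have h := Perm.card_partition_eq_mul_zFactor α
    have hz : (α.parts.zFactor : ℚ) ≠ 0 :=
      Nat.cast_ne_zero.2 (right_ne_zero_of_mul (h ▸ factorial_ne_zero _))
    rw [eq_div_iff hz, ← h, Nat.cast_mul]
  have hsum : (Fintype.card X)! * Nat.card (Finpartition (univ : Finset X)) =
      ∑ α : (Fintype.card X).Partition,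
        #{σ : Perm X | σ.partition = α} * α.parts.count 1 ^ Fintype.card X := by
    rw [factorial_mul_card_finpartition, ← sum_fiberwise univ Perm.partition]
    exact sum_congr rfl fun α _ => sum_const_nat fun σ hσ => by
      rw [← Perm.count_one_parts_partition, (mem_filter.1 hσ).2]
  have hN : ((Fintype.card X)! : ℚ) ≠ 0 := Nat.cast_ne_zero.2 (factorial_ne_zero _)
  apply mul_left_cancel₀ hN
  rw [← Nat.cast_mul, hsum, mul_sum]
  push_cast
  refine sum_congr rfl fun α _ => ?_
  rw [hfib]
  field_simp

theorem bell_eq_partition_sum_general (n : ℕ) :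
    (bell n : ℚ) =
      ∑ α ∈ (Finset.univ : Finset (Nat.Partition n)),
        (∏ i ∈ α.parts.toFinset,
            (i : ℚ) ^ (α.parts.count i) * (Nat.factorial (α.parts.count i) : ℚ))⁻¹ *
          (α.parts.count 1 : ℚ) ^ n := by
  have h := card_finpartition_eq_sum (Fin n)
  rw [Fintype.card_fin] at h
  rw [bell, h]
  push_cast [Multiset.zFactor]
  rfl

/-- **Partition-sum formula for the Bell numbers:** for `n ≥ 1`,
`B_n = ∑_{α ∈ P_n} h(β(α)) · β₁(α)^n`, where `β₁(α)` is the number of parts of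
`α` equal to `1` and `h(β) = (∏ i, i^{β_i} β_i!)⁻¹`. -/
theorem bell_eq_partition_sum (n : ℕ) (hn : 1 ≤ n) :
    (bell n : ℚ) =
      ∑ α ∈ (Finset.univ : Finset (Nat.Partition n)),
        (∏ i ∈ α.parts.toFinset,
            (i : ℚ) ^ (α.parts.count i) * (Nat.factorial (α.parts.count i) : ℚ))⁻¹ *
          (α.parts.count 1 : ℚ) ^ n :=
  bell_eq_partition_sum_general n
end
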